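/- Let p be an odd prime, K an algebraically closed field of characteristic p, and P, Q ∈ K with P ≠ 0, Q ≠ 0 and D = P² - 4Q ≠ 0. Then U_{p-1}(P,Q) · U_{p+1}(P,Q) = 0 if and only if P²/Q lies in the prime field F_p (equivalently, (P²/Q)^{p-1} = 1). -/
import Mathlib


def lucasUF {K : Type*} [CommRing K] (P Q : K) : ℕ → K
  | 0 => 0
  | 1 => 1
  | n + 2 => P * lucasUF P Q (n + 1) - Q * lucasUF P Q n

theorem lucasUF_pred_succ_eq_zero_iff (p : ℕ) (hp : p.Prime) (hodd : p ≠ 2)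
    (K : Type*) [Field K] [IsAlgClosed K] [CharP K p]
    (P Q : K) (hP : P ≠ 0) (hQ : Q ≠ 0) (hD : P ^ 2 - 4 * Q ≠ 0) :
    lucasUF P Q (p - 1) * lucasUF P Q (p + 1) = 0 ↔
      (P ^ 2 / Q) ^ (p - 1) = 1 := by
  haveI := Fact.mk hp
  have h2 : (2 : K) ≠ 0 := by
    intro h
    have hdvd : p ∣ 2 := (CharP.cast_eq_zero_iff K p 2).mp (by exact_mod_cast h)
    exact hodd ((Nat.prime_dvd_prime_iff_eq hp Nat.prime_two).mp hdvd)
  obtain ⟨d, hd⟩ := IsAlgClosed.exists_pow_nat_eq (P ^ 2 - 4 * Q) (n := 2) (by norm_num)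
  set a : K := (P + d) / 2 with ha_def
  set b : K := (P - d) / 2 with hb_def
  have hab : a + b = P := by rw [ha_def, hb_def]; field_simp; ring
  have hmul : a * b = Q := by
    rw [ha_def, hb_def]; field_simp; linear_combination -hd
  have hd0 : d ≠ 0 := by
    intro h; apply hD; rw [← hd, h]; ring
  have hsub : a - b = d := by rw [ha_def, hb_def]; field_simp; ring
  clear_value a b
  have hsub0 : a - b ≠ 0 := hsub ▸ hd0
  have ha : a ≠ 0 := fun h => hQ (by rw [← hmul, h, zero_mul])
  have hb : b ≠ 0 := fun h => hQ (by rw [← hmul, h, mul_zero])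
  have hU : ∀ n, lucasUF P Q n * (a - b) = a ^ n - b ^ n := by
    intro n
    induction n using Nat.strong_induction_on with
    | _ n ih =>
      match n with
      | 0 => simp [lucasUF]
      | 1 => simp [lucasUF]
      | (m + 2) =>
        have h1 := ih (m + 1) (by omega)
        have h0 := ih m (by omega)
        show (P * lucasUF P Q (m + 1) - Q * lucasUF P Q m) * (a - b) = _
        linear_combination P * h1 - Q * h0 + (a ^ (m + 1) - b ^ (m + 1)) * hab.symm
          - (a ^ m - b ^ m) * hmul.symm
  have key : ∀ n, lucasUF P Q n = (a ^ n - b ^ n) / (a - b) := fun n =>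
    (eq_div_iff hsub0).mpr (hU n)
  obtain ⟨q, rfl⟩ : ∃ q, p = q + 1 := ⟨p - 1, by have := hp.pos; omega⟩
  have hq1 : q + 1 - 1 = q := by omega
  have hq2 : q + 1 + 1 = q + 2 := by omega
  rw [hq1, hq2, key, key, div_mul_div_comm, div_eq_zero_iff]
  have hsubsq : (a - b) * (a - b) ≠ 0 := mul_ne_zero hsub0 hsub0
  have hs0 : P ^ 2 / Q ≠ 0 := div_ne_zero (pow_ne_zero _ hP) hQ
  have hfr : (a + b) ^ (q + 1) = a ^ (q + 1) + b ^ (q + 1) := add_pow_char a b (q + 1)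
  have main : (P ^ 2 / Q) ^ (q + 1) - P ^ 2 / Q =
      ((a ^ q - b ^ q) * (a ^ (q + 2) - b ^ (q + 2))) / (a ^ (q + 1) * b ^ (q + 1)) := by
    rw [← hab, ← hmul, div_pow, ← pow_mul, mul_comm 2 (q + 1), pow_mul, hfr]
    rw [div_sub_div _ _ (pow_ne_zero _ (mul_ne_zero ha hb)) (mul_ne_zero ha hb),
      div_eq_div_iff (mul_ne_zero (pow_ne_zero _ (mul_ne_zero ha hb)) (mul_ne_zero ha hb))
        (mul_ne_zero (pow_ne_zero _ ha) (pow_ne_zero _ hb))]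
    ring
  constructor
  · rintro (h | h)
    · have hzero : (P ^ 2 / Q) ^ (q + 1) - P ^ 2 / Q = 0 := by
        rw [main, h, zero_div]
      have hcancel : (P ^ 2 / Q) ^ q * (P ^ 2 / Q) = 1 * (P ^ 2 / Q) := by
        rw [one_mul, ← pow_succ]; linear_combination hzero
      exact mul_right_cancel₀ hs0 hcancel
    · exact absurd h hsubsq
  · intro h
    left
    have hzero : (P ^ 2 / Q) ^ (q + 1) - P ^ 2 / Q = 0 := by
      rw [pow_succ, h, one_mul, sub_self]
    rw [hzero] at main
    rcases (div_eq_zero_iff.mp main.symm) with h' | h'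
    · exact h'
    · exact absurd h' (mul_ne_zero (pow_ne_zero _ ha) (pow_ne_zero _ hb))
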